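/- arXiv:2508.20365 — 4 statements merged into one kernel-verified Lean document; each statement's English description precedes it below -/
import Mathlib

section
/- Invariance of the represented data under rewriting: if (t₁, Θ₁) ⟶ (t₂, Θ₂), then Θ₁t₁ = Θ₂t₂. -/
namespace STPaper

variable {A V : Type}

/-- A word over the alphabet `A`. -/
abbrev Word (A : Type) := List A

/-- A pattern: a finite word over `A ⊕ V` (letters and variables). -/
abbrev Pat (A V : Type) := List (A ⊕ V)

/-- A tuple pattern: a finite tuple of patterns. -/
abbrev TP (A V : Type) := List (Pat A V)

/-- A column of learning data: one word per row. -/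
abbrev Col (A : Type) := List (Word A)

/-- Learning data, represented as its list of columns. -/
abbrev Data (A : Type) := List (Col A)

/-- A data-substitution `[M/x⃗]`: the number `m` of rows together with the list pairing each
variable of `x⃗` with the corresponding column of `M`. -/
structure DSub (A V : Type) where
  m : ℕ
  entries : List (V × Col A)

/-- Apply a word-valued substitution to a pattern. -/
def substPatW (θ : V → Word A) (p : Pat A V) : Word A :=
  (p.map (Sum.elim (fun a => [a]) θ)).flatten

/-- Look up the column assigned to a variable by a data-substitution (default: all-ε). -/
def lookupCol [DecidableEq V] (E : List (V × Col A)) (x : V) : Col A :=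
  match E.find? (fun e => decide (e.1 = x)) with
  | some e => e.2
  | none => []

/-- The substitution corresponding to the `i`-th row of a data-substitution. -/
def DSub.rowSub [DecidableEq V] (Θ : DSub A V) (i : ℕ) : V → Word A :=
  fun x => (lookupCol Θ.entries x).getD i []

/-- `Θ.apply t` : the matrix `Θt` (as a list of columns, each of length `Θ.m`). -/
def DSub.apply [DecidableEq V] (Θ : DSub A V) (t : TP A V) : Data A :=
  t.map (fun p => (List.range Θ.m).map (fun i => substPatW (Θ.rowSub i) p))

/-- Well-formedness of a data-substitution: pairwise-distinct variables and
all columns of length `m`. -/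
def DSub.WF (Θ : DSub A V) : Prop :=
  (Θ.entries.map Prod.fst).Nodup ∧ ∀ e ∈ Θ.entries, e.2.length = Θ.m

/-- The free variables of a tuple pattern. -/
def fvTP (t : TP A V) : Set V := {x | Sum.inr x ∈ t.flatten}

/-- Substitution of a single pattern `q` for the variable `x` in a pattern. -/
def substVar [DecidableEq A] [DecidableEq V] (x : V) (q : Pat A V) (p : Pat A V) : Pat A V :=
  (p.map (fun s => if s = Sum.inr x then q else [s])).flatten

/-- Substitution of a single pattern `q` for the variable `x` in a tuple pattern. -/
def substVarTP [DecidableEq A] [DecidableEq V] (x : V) (q : Pat A V) (t : TP A V) : TP A V :=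
  t.map (substVar x q)

/-- Simultaneous substitution `[qs/xs]p` of the patterns `qs` for the variables `xs`. -/
def substVars [DecidableEq V] (xs : List V) (qs : List (Pat A V)) (p : Pat A V) : Pat A V :=
  (p.map (fun s =>
    match s with
    | Sum.inl a => [Sum.inl a]
    | Sum.inr x =>
      match (xs.zip qs).find? (fun e => decide (e.1 = x)) with
      | some e => e.2
      | none => [Sum.inr x])).flatten

/-- Simultaneous substitution `[qs/xs]t` on a tuple pattern. -/
def substVarsTP [DecidableEq V] (xs : List V) (qs : List (Pat A V)) (t : TP A V) : TP A V :=
  t.map (substVars xs qs)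

/-- A column is the all-ε column. -/
def allEps (c : Col A) : Prop := ∀ w ∈ c, w = []

/-- The trivial tuple pattern `(x₁, …, xₙ)`. -/
def trivTP (xs : List V) : TP A V := xs.map (fun x => [Sum.inr x])

section
variable [DecidableEq A] [DecidableEq V]

/-- The rewriting relation ⟶ on pairs of a tuple pattern and a data-substitution. -/
inductive Step : (TP A V × DSub A V) → (TP A V × DSub A V) → Prop
  | pre (t : TP A V) (m : ℕ) (E : List (V × Col A)) (i j : ℕ)
      (hi : i < E.length) (hj : j < E.length) (hij : i ≠ j)
      (s : Col A) (hslen : s.length = (E[i]'hi).2.length)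
      (hpre : (E[j]'hj).2 = List.zipWith (· ++ ·) (E[i]'hi).2 s)
      (hne : ¬ allEps (E[i]'hi).2)
      (x' : V) (hx1 : x' ∉ E.map Prod.fst) (hx2 : Sum.inr x' ∉ t.flatten) :
      Step (t, ⟨m, E⟩)
        (substVarTP (E[j]'hj).1 [Sum.inr (E[i]'hi).1, Sum.inr x'] t,
         ⟨m, E.set j (x', s)⟩)
  | cpre (t : TP A V) (m : ℕ) (E : List (V × Col A)) (j : ℕ)
      (hj : j < E.length) (a : A) (s : Col A)
      (hpre : (E[j]'hj).2 = s.map (fun w => a :: w))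
      (x' : V) (hx1 : x' ∉ E.map Prod.fst) (hx2 : Sum.inr x' ∉ t.flatten) :
      Step (t, ⟨m, E⟩)
        (substVarTP (E[j]'hj).1 [Sum.inl a, Sum.inr x'] t, ⟨m, E.set j (x', s)⟩)
  | eps (t : TP A V) (m : ℕ) (E : List (V × Col A)) (j : ℕ)
      (hj : j < E.length) (heps : allEps (E[j]'hj).2) :
      Step (t, ⟨m, E⟩) (substVarTP (E[j]'hj).1 [] t, ⟨m, E.eraseIdx j⟩)

/-- `n`-step rewriting. -/
def StepN : ℕ → (TP A V × DSub A V) → (TP A V × DSub A V) → Prop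
  | 0 => fun c₁ c₂ => c₁ = c₂
  | n + 1 => fun c₁ c₃ => ∃ c₂, Step c₁ c₂ ∧ StepN n c₂ c₃

end

/-- The reduction relation ⇒ on tuple patterns. -/
inductive PStep : TP A V → TP A V → Prop
  | pre (t : TP A V) (i j : ℕ) (hi : i < t.length) (hj : j < t.length)
      (hij : i ≠ j) (p' : Pat A V)
      (hdec : t[j]'hj = (t[i]'hi) ++ p') (hne : t[i]'hi ≠ []) :
      PStep t (t.set j p')
  | cpre (t : TP A V) (j : ℕ) (hj : j < t.length) (a : A) (p' : Pat A V)
      (hdec : t[j]'hj = Sum.inl a :: p') :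
      PStep t (t.set j p')
  | eps (t : TP A V) (j : ℕ) (hj : j < t.length) (heps : t[j]'hj = []) :
      PStep t (t.eraseIdx j)

/-- A tuple pattern is solvable if it reduces to a trivial tuple of pairwise
distinct variables. -/
def Solvable (t : TP A V) : Prop :=
  ∃ ys : List V, ys.Nodup ∧ Relation.ReflTransGen PStep t (trivTP ys)

/-- The language of a tuple pattern. -/
def lang (t : TP A V) : Set (List (Word A)) :=
  {w | ∃ θ : V → Word A, w = t.map (substPatW θ)}

/-- `M ⊨ t` : there is a data-substitution `Θ` (with `rows` rows) with `Θt = M`. -/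
def Models [DecidableEq V] (M : Data A) (rows : ℕ) (t : TP A V) : Prop :=
  ∃ Θ : DSub A V, Θ.m = rows ∧ Θ.WF ∧ Θ.apply t = M

/-- `M ⊨ₛ t` : additionally, no variable of `t` is mapped to ε in every row. -/
def SModels [DecidableEq V] (M : Data A) (rows : ℕ) (t : TP A V) : Prop :=
  ∃ Θ : DSub A V, Θ.m = rows ∧ Θ.WF ∧ Θ.apply t = M ∧
    ∀ x ∈ fvTP t, ¬ allEps (lookupCol Θ.entries x)

/-- Renaming the variables of a tuple pattern. -/
def renameTP (ρ : V → V) (t : TP A V) : TP A V :=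
  t.map (List.map (Sum.map id ρ))

/-- The measure `#t` of a tuple pattern. -/
def tpMeasure (t : TP A V) : ℕ := (t.map List.length).sum + t.length

/-- `size(M)`. -/
def dataSize (M : Data A) : ℕ :=
  (M.map (fun c => (c.map (fun w => w.length + 1)).sum)).sum

/-- Learning data (as columns) whose rows enumerate the given list of tuples. -/
def colsOfRows (n : ℕ) (rows : List (List (Word A))) : Data A :=
  (List.range n).map (fun j => rows.map (fun r => r.getD j []))

/-- `m ⊨ₛ t` for a (possibly infinite) set of tuples of words. -/
def SetSModels (S : Set (List (Word A))) (t : TP A V) : Prop :=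
  ∃ θ : S → V → Word A,
    (∀ v : S, (v : List (Word A)) = t.map (substPatW (θ v))) ∧
    ∀ x ∈ fvTP t, ∃ v : S, θ v x ≠ []

/-- A rule instance of the ⇒ relation. -/
inductive RuleInst (A V : Type) where
  | pre (i j : ℕ)
  | cpre (j : ℕ) (a : A)
  | eps (j : ℕ)

/-- The reduction step derived by a given rule instance. -/
def RuleStep : RuleInst A V → TP A V → TP A V → Prop
  | .pre i j, t, t' => ∃ (hi : i < t.length) (hj : j < t.length),
      i ≠ j ∧ t[i]'hi ≠ [] ∧ ∃ p', t[j]'hj = (t[i]'hi) ++ p' ∧ t' = t.set j p'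
  | .cpre j a, t, t' => ∃ (_ : j < t.length) (p' : Pat A V),
      t.getD j [] = Sum.inl a :: p' ∧ t' = t.set j p'
  | .eps j, t, t' => ∃ (_ : j < t.length), t.getD j [] = ([] : Pat A V) ∧ t' = t.eraseIdx j

/-- Well-definedness of the residual of a tuple pattern along a rule instance. -/
def ResDefined : RuleInst A V → TP A V → Prop
  | .pre i j, t => i < t.length ∧ j < t.length ∧ (t.getD i []) <+: (t.getD j [])
  | .cpre j a, t => j < t.length ∧ ∃ p', t.getD j [] = Sum.inl a :: p'
  | .eps j, t => j < t.length ∧ t.getD j [] = ([] : Pat A V)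

/-- The residual of a tuple pattern along a rule instance. -/
def residual : RuleInst A V → TP A V → TP A V
  | .pre i j, t => t.set j ((t.getD j []).drop (t.getD i []).length)
  | .cpre j _, t => t.set j ((t.getD j []).drop 1)
  | .eps j, t => t.eraseIdx j

/-- The reduction relation ⇒ extended with the postfix rules. -/
inductive PStepX : TP A V → TP A V → Prop
  | pre (t : TP A V) (i j : ℕ) (hi : i < t.length) (hj : j < t.length)
      (hij : i ≠ j) (p' : Pat A V)
      (hdec : t[j]'hj = (t[i]'hi) ++ p') (hne : t[i]'hi ≠ []) :
      PStepX t (t.set j p')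
  | cpre (t : TP A V) (j : ℕ) (hj : j < t.length) (a : A) (p' : Pat A V)
      (hdec : t[j]'hj = Sum.inl a :: p') :
      PStepX t (t.set j p')
  | eps (t : TP A V) (j : ℕ) (hj : j < t.length) (heps : t[j]'hj = []) :
      PStepX t (t.eraseIdx j)
  | post (t : TP A V) (i j : ℕ) (hi : i < t.length) (hj : j < t.length)
      (hij : i ≠ j) (p' : Pat A V)
      (hdec : t[j]'hj = p' ++ (t[i]'hi)) (hne : t[i]'hi ≠ []) :
      PStepX t (t.set j p')
  | cpost (t : TP A V) (j : ℕ) (hj : j < t.length) (a : A) (p' : Pat A V)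
      (hdec : t[j]'hj = p' ++ [Sum.inl a]) :
      PStepX t (t.set j p')

section Aux
variable {A V : Type} [DecidableEq A] [DecidableEq V]

theorem substPatW_append (θ : V → Word A) (p q : Pat A V) :
    substPatW θ (p ++ q) = substPatW θ p ++ substPatW θ q := by
  simp [substPatW]

theorem substPatW_congr (θ θ' : V → Word A) (p : Pat A V)
    (h : ∀ x, Sum.inr x ∈ p → θ x = θ' x) :
    substPatW θ p = substPatW θ' p := by
  induction p with
  | nil => rfl
  | cons s p ih =>
    have ih' := ih (fun x hx => h x (List.mem_cons_of_mem _ hx))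
    cases s with
    | inl a =>
      simp only [substPatW, List.map_cons, List.flatten_cons, Sum.elim_inl] at *
      rw [ih']
    | inr y =>
      simp only [substPatW, List.map_cons, List.flatten_cons, Sum.elim_inr] at *
      rw [ih', h y List.mem_cons_self]

theorem substPatW_substVar (θ : V → Word A) (x : V) (q p : Pat A V) :
    substPatW θ (substVar x q p)
      = substPatW (Function.update θ x (substPatW θ q)) p := by
  induction p with
  | nil => rfl
  | cons s p ih =>
    have hs : substVar x q (s :: p)
        = (if s = Sum.inr x then q else [s]) ++ substVar x q p := by
      simp [substVar]
    have hsp : substPatW (Function.update θ x (substPatW θ q)) (s :: p)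
        = Sum.elim (fun a => [a]) (Function.update θ x (substPatW θ q)) s
          ++ substPatW (Function.update θ x (substPatW θ q)) p := by
      simp only [substPatW, List.map_cons, List.flatten_cons]
    rw [hs, substPatW_append, ih, hsp]
    congr 1
    by_cases h : s = Sum.inr x
    · subst h; rw [if_pos rfl, Sum.elim_inr, Function.update_self]
    · rw [if_neg h]
      cases s with
      | inl a => simp [substPatW]
      | inr y =>
        have hy : y ≠ x := fun hxy => h (by rw [hxy])
        simp [substPatW, Function.update_of_ne hy]

theorem find?_set_neg {α : Type*} (p : α → Bool) (l : List α) (j : ℕ) (hj : j < l.length)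
    (e : α) (h1 : p (l[j]'hj) = false) (h2 : p e = false) :
    (l.set j e).find? p = l.find? p := by
  induction l generalizing j with
  | nil => simp at hj
  | cons a l ih =>
    cases j with
    | zero =>
      simp only [List.getElem_cons_zero] at h1
      simp [List.find?_cons, h1, h2]
    | succ j =>
      have hj' : j < l.length := Nat.lt_of_succ_lt_succ (by simpa using hj)
      simp only [List.getElem_cons_succ] at h1
      cases hp : p a with
      | true => simp [List.find?_cons_of_pos hp]
      | false =>
        rw [List.set_cons_succ, List.find?_cons_of_neg (by simp [hp]),
          List.find?_cons_of_neg (by simp [hp])]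
        exact ih j hj' h1

theorem find?_set_pos {α : Type*} (p : α → Bool) (l : List α) (j : ℕ) (hj : j < l.length)
    (e : α) (hall : ∀ a ∈ l, p a = false) (he : p e = true) :
    (l.set j e).find? p = some e := by
  induction l generalizing j with
  | nil => simp at hj
  | cons a l ih =>
    cases j with
    | zero => simp [List.find?_cons_of_pos he]
    | succ j =>
      have ha := hall a List.mem_cons_self
      rw [List.set_cons_succ, List.find?_cons_of_neg (by simp [ha])]
      exact ih j (Nat.lt_of_succ_lt_succ (by simpa using hj))
        (fun b hb => hall b (List.mem_cons_of_mem _ hb))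

theorem find?_eraseIdx_neg {α : Type*} (p : α → Bool) (l : List α) (j : ℕ)
    (hj : j < l.length) (h1 : p (l[j]'hj) = false) :
    (l.eraseIdx j).find? p = l.find? p := by
  induction l generalizing j with
  | nil => simp at hj
  | cons a l ih =>
    cases j with
    | zero =>
      simp only [List.getElem_cons_zero] at h1
      simp [List.eraseIdx, List.find?_cons, h1]
    | succ j =>
      have hj' : j < l.length := Nat.lt_of_succ_lt_succ (by simpa using hj)
      simp only [List.getElem_cons_succ] at h1
      cases hp : p a with
      | true => simp [List.eraseIdx, List.find?_cons_of_pos hp]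
      | false =>
        rw [List.eraseIdx_cons_succ, List.find?_cons_of_neg (by simp [hp]),
          List.find?_cons_of_neg (by simp [hp])]
        exact ih j hj' h1

theorem find?_fst_nodup (E : List (V × Col A)) (k : ℕ) (hk : k < E.length)
    (hnd : (E.map Prod.fst).Nodup) :
    E.find? (fun e => decide (e.1 = (E[k]'hk).1)) = some (E[k]'hk) := by
  induction E generalizing k with
  | nil => simp at hk
  | cons e E ih =>
    rw [List.map_cons, List.nodup_cons] at hnd
    cases k with
    | zero => simp [List.find?_cons]
    | succ k =>
      have hk' : k < E.length := Nat.lt_of_succ_lt_succ (by simpa using hk)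
      have hne : e.1 ≠ (E[k]'hk').1 := by
        intro h
        exact hnd.1 (h ▸ List.mem_map_of_mem (List.getElem_mem hk'))
      simp only [List.getElem_cons_succ]
      rw [List.find?_cons_of_neg (by simp [hne])]
      exact ih k hk' hnd.2

theorem lookupCol_of_find? {E : List (V × Col A)} {x : V} {v : V × Col A}
    (h : E.find? (fun e => decide (e.1 = x)) = some v) : lookupCol E x = v.2 := by
  unfold lookupCol; rw [h]

theorem lookupCol_congr {E E' : List (V × Col A)} {x : V}
    (h : E.find? (fun e => decide (e.1 = x)) = E'.find? (fun e => decide (e.1 = x))) :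
    lookupCol E x = lookupCol E' x := by
  unfold lookupCol; rw [h]

theorem lookupCol_getElem (E : List (V × Col A)) (k : ℕ) (hk : k < E.length)
    (hnd : (E.map Prod.fst).Nodup) :
    lookupCol E (E[k]'hk).1 = (E[k]'hk).2 :=
  lookupCol_of_find? (find?_fst_nodup E k hk hnd)

theorem fst_ne_of_not_mem {E : List (V × Col A)} {x : V} (hx : x ∉ E.map Prod.fst)
    {k : ℕ} (hk : k < E.length) : (E[k]'hk).1 ≠ x := by
  intro h
  exact hx (h ▸ List.mem_map_of_mem (List.getElem_mem hk))

theorem fst_ne_of_nodup {E : List (V × Col A)} (hnd : (E.map Prod.fst).Nodup)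
    {i j : ℕ} (hi : i < E.length) (hj : j < E.length) (hij : i ≠ j) :
    (E[i]'hi).1 ≠ (E[j]'hj).1 := by
  intro h
  have hi' : i < (E.map Prod.fst).length := by simpa using hi
  have hj' : j < (E.map Prod.fst).length := by simpa using hj
  have : (E.map Prod.fst)[i]'hi' = (E.map Prod.fst)[j]'hj' := by
    simpa using h
  exact hij ((List.Nodup.getElem_inj_iff hnd).mp this)

/-- Key reduction: applying a substituted tuple pattern. -/
theorem apply_substVarTP (Θ Θ' : DSub A V) (hm : Θ'.m = Θ.m) (t : TP A V)
    (x : V) (q : Pat A V)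
    (hx : ∀ r, r < Θ.m → Θ.rowSub r x = substPatW (Θ'.rowSub r) q)
    (hother : ∀ y, Sum.inr y ∈ t.flatten → y ≠ x →
      ∀ r, r < Θ.m → Θ.rowSub r y = Θ'.rowSub r y) :
    Θ.apply t = Θ'.apply (substVarTP x q t) := by
  unfold DSub.apply substVarTP
  rw [List.map_map, hm]
  apply List.map_congr_left
  intro p hp
  apply List.map_congr_left
  intro r hr
  show substPatW (Θ.rowSub r) p = substPatW (Θ'.rowSub r) (substVar x q p)
  rw [substPatW_substVar]
  apply substPatW_congr
  intro y hy
  by_cases hyx : y = x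
  · subst hyx
    rw [Function.update_self]
    exact hx r (List.mem_range.mp hr)
  · rw [Function.update_of_ne hyx]
    exact hother y (List.mem_flatten.mpr ⟨p, hp, hy⟩) hyx r (List.mem_range.mp hr)

end Aux

/-- **Invariance of the represented data under rewriting.**
If `(t₁, Θ₁) ⟶ (t₂, Θ₂)` (with `Θ₁` a well-formed data-substitution), then
`Θ₁t₁ = Θ₂t₂`. -/
theorem step_invariant
    [DecidableEq A] [DecidableEq V] [Nontrivial A] [Countable V] [Infinite V]
    (t₁ t₂ : TP A V) (Θ₁ Θ₂ : DSub A V) (hwf : Θ₁.WF)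
    (h : Step (t₁, Θ₁) (t₂, Θ₂)) :
    Θ₁.apply t₁ = Θ₂.apply t₂ := by
  have hzip : ∀ (c d : Col A) (r : ℕ), r < c.length → r < d.length →
      (List.zipWith (· ++ ·) c d).getD r [] = c.getD r [] ++ d.getD r [] := by
    intro c d r hc hd
    rw [List.getD_eq_getElem _ _ (by rw [List.length_zipWith]; exact lt_min hc hd),
      List.getElem_zipWith, List.getD_eq_getElem _ _ hc, List.getD_eq_getElem _ _ hd]
  cases h with
  | pre t m E i j hi hj hij s hslen hpre hne x' hx1 hx2 =>
    obtain ⟨hnd, hlen⟩ := hwf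
    have hlenj : (E[j]'hj).2.length = m := hlen _ (List.getElem_mem hj)
    have hleni : (E[i]'hi).2.length = m := hlen _ (List.getElem_mem hi)
    have hlens : s.length = m := hslen.trans hleni
    have hji : (E[j]'hj).1 ≠ (E[i]'hi).1 := fst_ne_of_nodup hnd hj hi (Ne.symm hij)
    apply apply_substVarTP ⟨m, E⟩ ⟨m, E.set j (x', s)⟩ rfl
    · intro r hr
      have hr' : r < m := hr
      have h1 : lookupCol E (E[j]'hj).1 = (E[j]'hj).2 := lookupCol_getElem E j hj hnd
      have h2 : lookupCol (E.set j (x', s)) (E[i]'hi).1 = (E[i]'hi).2 := by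
        have hfind := find?_set_neg (fun e => decide (e.1 = (E[i]'hi).1)) E j hj (x', s)
          (by simp [hji]) (by simp [(Ne.symm (fst_ne_of_not_mem hx1 hi) : x' ≠ _)])
        rw [lookupCol_congr hfind, lookupCol_getElem E i hi hnd]
      have h3 : lookupCol (E.set j (x', s)) x' = s := by
        apply lookupCol_of_find? (v := (x', s))
        apply find?_set_pos _ _ _ hj
        · intro e he
          simp only [decide_eq_false_iff_not]
          exact fun hh => hx1 (hh ▸ List.mem_map_of_mem he)
        · simp
      simp only [DSub.rowSub, substPatW, List.map_cons, List.map_nil, Sum.elim_inr,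
        List.flatten_cons, List.flatten_nil, List.append_nil]
      rw [h1, h2, h3, hpre]
      exact hzip _ _ r (by omega) (by omega)
    · intro y hyt hyx r hr
      have hy' : y ≠ x' := fun hh => hx2 (hh ▸ hyt)
      have hfind := find?_set_neg (fun e => decide (e.1 = y)) E j hj (x', s)
        (by simp [(Ne.symm hyx : (E[j]'hj).1 ≠ y)]) (by simp [(Ne.symm hy' : x' ≠ y)])
      simp only [DSub.rowSub]
      rw [lookupCol_congr hfind]
  | cpre t m E j hj a s hpre x' hx1 hx2 =>
    obtain ⟨hnd, hlen⟩ := hwf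
    have hlenj : (E[j]'hj).2.length = m := hlen _ (List.getElem_mem hj)
    have hlens : s.length = m := by
      have : (E[j]'hj).2.length = s.length := by rw [hpre]; simp
      omega
    apply apply_substVarTP ⟨m, E⟩ ⟨m, E.set j (x', s)⟩ rfl
    · intro r hr
      have hr' : r < m := hr
      have h1 : lookupCol E (E[j]'hj).1 = (E[j]'hj).2 := lookupCol_getElem E j hj hnd
      have h3 : lookupCol (E.set j (x', s)) x' = s := by
        apply lookupCol_of_find? (v := (x', s))
        apply find?_set_pos _ _ _ hj
        · intro e he
          simp only [decide_eq_false_iff_not]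
          exact fun hh => hx1 (hh ▸ List.mem_map_of_mem he)
        · simp
      simp only [DSub.rowSub, substPatW, List.map_cons, List.map_nil, Sum.elim_inr,
        Sum.elim_inl, List.flatten_cons, List.flatten_nil, List.append_nil,
        List.singleton_append]
      rw [h1, h3, hpre]
      rw [List.getD_eq_getElem _ _ (by simp; omega), List.getElem_map,
        List.getD_eq_getElem _ _ (by omega)]
    · intro y hyt hyx r hr
      have hy' : y ≠ x' := fun hh => hx2 (hh ▸ hyt)
      have hfind := find?_set_neg (fun e => decide (e.1 = y)) E j hj (x', s)
        (by simp [(Ne.symm hyx : (E[j]'hj).1 ≠ y)]) (by simp [(Ne.symm hy' : x' ≠ y)])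
      simp only [DSub.rowSub]
      rw [lookupCol_congr hfind]
  | eps t m E j hj heps =>
    obtain ⟨hnd, hlen⟩ := hwf
    apply apply_substVarTP ⟨m, E⟩ ⟨m, E.eraseIdx j⟩ rfl
    · intro r hr
      simp only [DSub.rowSub]
      rw [lookupCol_getElem E j hj hnd]
      show (E[j]'hj).2.getD r [] = substPatW _ []
      have hnil : substPatW (DSub.rowSub ⟨m, E.eraseIdx j⟩ r) ([] : Pat A V) = [] := rfl
      rw [hnil]
      rcases Nat.lt_or_ge r (E[j]'hj).2.length with hlt | hge
      · rw [List.getD_eq_getElem _ _ hlt]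
        exact heps _ (List.getElem_mem hlt)
      · exact List.getD_eq_default _ _ hge
    · intro y hyt hyx r hr
      have hfind := find?_eraseIdx_neg (fun e => decide (e.1 = y)) E j hj
        (by simp [(Ne.symm hyx : (E[j]'hj).1 ≠ y)])
      simp only [DSub.rowSub]
      rw [lookupCol_congr hfind]

end STPaper
end

section
/- Closure of pattern reduction under substitution: if t ⇒ t′, then [t₁/x⃗]t ⇒* [t₁/x⃗]t′ for every tuple pattern t₁ and tuple of pairwise distinct variables x⃗ of the same length as t₁. (In fact either [t₁/x⃗]t ⇒ [t₁/x⃗]t′ or [t₁/x⃗]t = [t₁/x⃗]t′, the latter occurring only when the empty word is substituted for some variables.) -/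
namespace STPaper

variable {A V : Type}

section SubstClosed
variable [DecidableEq A] [DecidableEq V]

lemma substVars_append (xs : List V) (qs : List (Pat A V)) (p q : Pat A V) :
    substVars xs qs (p ++ q) = substVars xs qs p ++ substVars xs qs q := by
  simp [substVars]

lemma substVars_nil (xs : List V) (qs : List (Pat A V)) :
    substVars xs qs ([] : Pat A V) = [] := rfl

lemma substVars_cons_inl (xs : List V) (qs : List (Pat A V)) (a : A) (p : Pat A V) :
    substVars xs qs (Sum.inl a :: p) = Sum.inl a :: substVars xs qs p := by
  simp [substVars]

lemma list_set_self {α : Type*} (l : List α) (j : ℕ) (h : j < l.length) :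
    l.set j (l[j]'h) = l := by
  apply List.ext_getElem
  · simp
  · intro i h1 h2
    rcases eq_or_ne i j with rfl | hne
    · simp
    · rw [List.getElem_set, if_neg (Ne.symm hne)]

lemma map_eraseIdx' {α β : Type*} (f : α → β) (l : List α) (j : ℕ) :
    (l.eraseIdx j).map f = (l.map f).eraseIdx j := by
  induction l generalizing j with
  | nil => simp
  | cons a l ih =>
    cases j with
    | zero => simp [List.eraseIdx]
    | succ j => simp [List.eraseIdx, ih]

lemma pstep_subst_aux (t t' : TP A V) (h : PStep t t')
    (xs : List V) (t₁ : TP A V) :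
    PStep (substVarsTP xs t₁ t) (substVarsTP xs t₁ t') ∨
      substVarsTP xs t₁ t = substVarsTP xs t₁ t' := by
  let σ := substVars xs t₁
  have hσ : σ = substVars xs t₁ := rfl
  have hlen : (substVarsTP xs t₁ t).length = t.length := by simp [substVarsTP, hσ]
  cases h with
  | pre i j hi hj hij p' hdec hne =>
    have hi' : i < (substVarsTP xs t₁ t).length := by omega
    have hj' : j < (substVarsTP xs t₁ t).length := by omega
    have hgi : (substVarsTP xs t₁ t)[i]'hi' = σ (t[i]'hi) := by
      simp [substVarsTP, hσ]
    have hgj : (substVarsTP xs t₁ t)[j]'hj' = σ (t[j]'hj) := by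
      simp [substVarsTP, hσ]
    have hdec' : (substVarsTP xs t₁ t)[j]'hj' =
        ((substVarsTP xs t₁ t)[i]'hi') ++ σ p' := by
      rw [hgi, hgj, hdec, hσ, substVars_append]
    have hset : substVarsTP xs t₁ (t.set j p') = (substVarsTP xs t₁ t).set j (σ p') := by
      simp [substVarsTP, List.map_set, hσ]
    by_cases hni : σ (t[i]'hi) = []
    · right
      rw [hset]
      have : σ p' = (substVarsTP xs t₁ t)[j]'hj' := by
        rw [hdec', hgi, hni]; rfl
      rw [this, list_set_self]
    · left
      rw [hset]
      exact PStep.pre _ i j hi' hj' hij (σ p') hdec' (by rwa [hgi])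
  | cpre j hj a p' hdec =>
    left
    have hj' : j < (substVarsTP xs t₁ t).length := by omega
    have hgj : (substVarsTP xs t₁ t)[j]'hj' = σ (t[j]'hj) := by
      simp [substVarsTP, hσ]
    have hset : substVarsTP xs t₁ (t.set j p') = (substVarsTP xs t₁ t).set j (σ p') := by
      simp [substVarsTP, List.map_set, hσ]
    rw [hset]
    refine PStep.cpre _ j hj' a (σ p') ?_
    rw [hgj, hdec, hσ, substVars_cons_inl]
  | eps j hj heps =>
    left
    have hj' : j < (substVarsTP xs t₁ t).length := by omega
    have hgj : (substVarsTP xs t₁ t)[j]'hj' = σ (t[j]'hj) := by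
      simp [substVarsTP, hσ]
    have herase : substVarsTP xs t₁ (t.eraseIdx j) = (substVarsTP xs t₁ t).eraseIdx j := by
      simp [substVarsTP, map_eraseIdx']
    rw [herase]
    exact PStep.eps _ j hj' (by rw [hgj, heps, hσ, substVars_nil])

end SubstClosed

/-- **Closure of pattern reduction under substitution.**
If `t ⇒ t′`, then `[t₁/x⃗]t ⇒* [t₁/x⃗]t′` for every tuple pattern `t₁` and tuple of
pairwise distinct variables `x⃗` of the same length as `t₁`; in fact either
`[t₁/x⃗]t ⇒ [t₁/x⃗]t′` or `[t₁/x⃗]t = [t₁/x⃗]t′`. -/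
theorem pstep_subst_closed
    [DecidableEq A] [DecidableEq V] [Nontrivial A] [Countable V] [Infinite V]
    (t t' : TP A V) (h : PStep t t')
    (xs : List V) (hxs : xs.Nodup) (t₁ : TP A V) (hlen : t₁.length = xs.length) :
    Relation.ReflTransGen PStep (substVarsTP xs t₁ t) (substVarsTP xs t₁ t') ∧
      (PStep (substVarsTP xs t₁ t) (substVarsTP xs t₁ t') ∨
        substVarsTP xs t₁ t = substVarsTP xs t₁ t') := by
  have h2 := pstep_subst_aux t t' h xs t₁
  refine ⟨?_, h2⟩
  rcases h2 with h2 | h2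
  · exact Relation.ReflTransGen.single h2
  · rw [h2]

end STPaper
end

section
/- Weak confluence of pattern reduction up to permutation: if t ⇒ t₁ and t ⇒ t₂, then there exist tuple patterns t₁′ and t₂′ such that t₁ ⇒* t₁′, t₂ ⇒* t₂′, and t₁′ is a permutation of t₂′. -/
namespace STPaper

variable {A V : Type}

section ListLemmas
variable {α : Type*}

lemma adj_lt {l : List α} {j k : ℕ} (hj : j < l.length) (hk : k < l.length) (hjk : j ≠ k) :
    (if k < j then k else k - 1) < (l.eraseIdx j).length := by
  rw [List.length_eraseIdx]; split_ifs <;> omega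

lemma getElem_eraseIdx_adj {l : List α} {j k : ℕ} (hj : j < l.length) (hk : k < l.length)
    (hjk : j ≠ k) (h : (if k < j then k else k - 1) < (l.eraseIdx j).length) :
    (l.eraseIdx j)[if k < j then k else k - 1] = l[k] := by
  by_cases hlt : k < j
  · simp only [if_pos hlt] at h ⊢
    simp [List.getElem_eraseIdx, hlt]
  · simp only [if_neg hlt] at h ⊢
    have h1 : ¬ (k - 1 < j) := by omega
    have h2 : k - 1 + 1 = k := by omega
    simp [List.getElem_eraseIdx, h1, h2]

lemma eraseIdx_set_comm' {l : List α} {j k : ℕ} (hj : j < l.length) (hjk : j ≠ k) (r : α) :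
    (l.set k r).eraseIdx j = (l.eraseIdx j).set (if k < j then k else k - 1) r := by
  apply List.ext_getElem
  · simp [List.length_eraseIdx, hj]
  · intro n h₁ h₂
    by_cases hkj : k < j
    · simp only [if_pos hkj] at h₂ ⊢
      by_cases hnj : n < j
      · by_cases hkn : k = n
        · simp [List.getElem_eraseIdx, List.getElem_set, hnj, hkn]
        · simp [List.getElem_eraseIdx, List.getElem_set, hnj, hkn]
      · simp [List.getElem_eraseIdx, List.getElem_set, hnj,
          (show ¬ k = n by omega), (show ¬ k = n + 1 by omega)]
    · simp only [if_neg hkj] at h₂ ⊢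
      by_cases hnj : n < j
      · simp [List.getElem_eraseIdx, List.getElem_set, hnj,
          (show ¬ k = n by omega), (show ¬ k - 1 = n by omega)]
      · by_cases hkn : k = n + 1
        · simp [List.getElem_eraseIdx, List.getElem_set, hnj, hkn,
            (show k - 1 = n by omega)]
        · simp [List.getElem_eraseIdx, List.getElem_set, hnj, hkn,
            (show ¬ k - 1 = n by omega)]

lemma eraseIdx_eraseIdx_comm {l : List α} {j k : ℕ} (hjk : j < k) (hk : k < l.length) :
    (l.eraseIdx j).eraseIdx (k - 1) = (l.eraseIdx k).eraseIdx j := by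
  apply List.ext_getElem
  · simp [List.length_eraseIdx]; split_ifs <;> omega
  · intro n h₁ h₂
    by_cases h1 : n < j
    · simp [List.getElem_eraseIdx, h1, (show n < k - 1 by omega), (show n < k by omega)]
    · by_cases h2 : n < k - 1
      · simp [List.getElem_eraseIdx, h1, h2, (show n + 1 < k by omega)]
      · simp [List.getElem_eraseIdx, h1, h2, (show ¬ n + 1 < j by omega),
          (show ¬ n + 1 < k by omega)]

lemma eraseIdx_set_self' (l : List α) (j : ℕ) (x : α) :
    (l.set j x).eraseIdx j = l.eraseIdx j := by
  apply List.ext_getElem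
  · simp [List.length_eraseIdx]
  · intro n h₁ h₂
    by_cases h1 : n < j
    · simp [List.getElem_eraseIdx, List.getElem_set, h1, (show ¬ j = n by omega)]
    · simp [List.getElem_eraseIdx, List.getElem_set, h1, (show ¬ j = n + 1 by omega)]

lemma perm_cons_eraseIdx' {l : List α} {j : ℕ} (hj : j < l.length) :
    l.Perm (l[j] :: l.eraseIdx j) := by
  conv_lhs => rw [← List.take_append_drop j l, ← List.getElem_cons_drop hj]
  rw [List.eraseIdx_eq_take_drop_succ]
  exact List.perm_middle

lemma perm_eraseIdx_eraseIdx {l : List α} {j k : ℕ} (hj : j < l.length) (hk : k < l.length)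
    (h : l[j] = l[k]) : (l.eraseIdx j).Perm (l.eraseIdx k) := by
  have h1 := perm_cons_eraseIdx' hj
  have h2 := perm_cons_eraseIdx' hk
  rw [h] at h1
  exact (h1.symm.trans h2).cons_inv

end ListLemmas

section JoinLemmas

lemma getElem_eraseIdx_low {α : Type*} {l : List α} {j k : ℕ} (hkj : k < j)
    (hkl : k < l.length) (h : k < (l.eraseIdx j).length) : (l.eraseIdx j)[k] = l[k] := by
  simp [List.getElem_eraseIdx, hkj]

lemma getElem_eraseIdx_high {α : Type*} {l : List α} {j k : ℕ} (hjk : j < k)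
    (hk : k < l.length) (h : k - 1 < (l.eraseIdx j).length) : (l.eraseIdx j)[k - 1] = l[k] := by
  have h1 : ¬ (k - 1 < j) := by omega
  have h2 : k - 1 + 1 = k := by omega
  simp [List.getElem_eraseIdx, h1, h2]

variable {A V : Type}

/-- Joinability up to permutation. -/
def Join (t₁ t₂ : TP A V) : Prop :=
  ∃ t₁' t₂' : TP A V,
    Relation.ReflTransGen PStep t₁ t₁' ∧ Relation.ReflTransGen PStep t₂ t₂' ∧ t₁'.Perm t₂'

lemma Join.symm {t₁ t₂ : TP A V} (h : Join t₁ t₂) : Join t₂ t₁ := by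
  obtain ⟨u₁, u₂, s₁, s₂, hp⟩ := h
  exact ⟨u₂, u₁, s₂, s₁, hp.symm⟩

lemma join_of_eq {t₁ t₂ : TP A V} (h : t₁ = t₂) : Join t₁ t₂ :=
  ⟨t₁, t₂, .refl, .refl, h ▸ List.Perm.refl _⟩

lemma join_common {t₁ t₂ u₁ u₂ : TP A V} (h₁ : Relation.ReflTransGen PStep t₁ u₁)
    (h₂ : Relation.ReflTransGen PStep t₂ u₂) (h : u₁ = u₂) : Join t₁ t₂ :=
  ⟨u₁, u₂, h₁, h₂, h ▸ List.Perm.refl _⟩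

lemma join_eps_eps_lt {t : TP A V} {j k : ℕ} (hlt : j < k) (hk : k < t.length)
    (hj0 : t[j]'(lt_trans hlt hk) = []) (hk0 : t[k]'hk = []) :
    Join (t.eraseIdx j) (t.eraseIdx k) := by
  have hj : j < t.length := lt_trans hlt hk
  have hb1 : k - 1 < (t.eraseIdx j).length := by rw [List.length_eraseIdx, if_pos hj]; omega
  have s1 : PStep (t.eraseIdx j) ((t.eraseIdx j).eraseIdx (k - 1)) :=
    PStep.eps _ (k - 1) hb1 (by rw [getElem_eraseIdx_high hlt hk hb1]; exact hk0)
  have hb2 : j < (t.eraseIdx k).length := by rw [List.length_eraseIdx, if_pos hk]; omega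
  have s2 : PStep (t.eraseIdx k) ((t.eraseIdx k).eraseIdx j) :=
    PStep.eps _ j hb2 (by rw [getElem_eraseIdx_low hlt hj hb2]; exact hj0)
  exact join_common (.single s1) (.single s2) (eraseIdx_eraseIdx_comm hlt hk)

lemma join_eps_eps {t : TP A V} {j k : ℕ} (hj : j < t.length) (hk : k < t.length)
    (hj0 : t[j]'hj = []) (hk0 : t[k]'hk = []) :
    Join (t.eraseIdx j) (t.eraseIdx k) := by
  rcases lt_trichotomy j k with h | rfl | h
  · exact join_eps_eps_lt h hk hj0 hk0
  · exact join_of_eq rfl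
  · exact (join_eps_eps_lt h hj hk0 hj0).symm

lemma join_eps_cpre {t : TP A V} {j k : ℕ} {a : A} {p' : Pat A V}
    (hj : j < t.length) (hk : k < t.length)
    (hj0 : t[j]'hj = []) (hk0 : t[k]'hk = Sum.inl a :: p') :
    Join (t.eraseIdx j) (t.set k p') := by
  have hjk : j ≠ k := by rintro rfl; rw [hj0] at hk0; cases hk0
  have hb : (if k < j then k else k - 1) < (t.eraseIdx j).length := adj_lt hj hk hjk
  have s1 : PStep (t.eraseIdx j) ((t.eraseIdx j).set (if k < j then k else k - 1) p') :=
    PStep.cpre _ _ hb a p' (by rw [getElem_eraseIdx_adj hj hk hjk hb]; exact hk0)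
  have s2 : PStep (t.set k p') ((t.set k p').eraseIdx j) :=
    PStep.eps _ j (by simpa using hj)
      (by rw [List.getElem_set, if_neg (Ne.symm hjk)]; exact hj0)
  exact join_common (.single s1) (.single s2) (eraseIdx_set_comm' hj hjk p').symm

lemma join_eps_pre {t : TP A V} {j i k : ℕ} {r : Pat A V}
    (hj : j < t.length) (hi : i < t.length) (hk : k < t.length) (hik : i ≠ k)
    (hj0 : t[j]'hj = []) (hdec : t[k]'hk = (t[i]'hi) ++ r) (hne : t[i]'hi ≠ []) :
    Join (t.eraseIdx j) (t.set k r) := by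
  have hij : i ≠ j := by rintro rfl; exact hne hj0
  have hkj : k ≠ j := by
    rintro rfl; rw [hj0] at hdec; exact hne (List.append_eq_nil_iff.mp hdec.symm).1
  have hbi : (if i < j then i else i - 1) < (t.eraseIdx j).length := adj_lt hj hi hij.symm
  have hbk : (if k < j then k else k - 1) < (t.eraseIdx j).length := adj_lt hj hk hkj.symm
  have s1 : PStep (t.eraseIdx j) ((t.eraseIdx j).set (if k < j then k else k - 1) r) :=
    PStep.pre _ (if i < j then i else i - 1) (if k < j then k else k - 1) hbi hbk
      (by split_ifs <;> omega) r
      (by rw [getElem_eraseIdx_adj hj hk hkj.symm hbk, getElem_eraseIdx_adj hj hi hij.symm hbi]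
          exact hdec)
      (by rw [getElem_eraseIdx_adj hj hi hij.symm hbi]; exact hne)
  have s2 : PStep (t.set k r) ((t.set k r).eraseIdx j) :=
    PStep.eps _ j (by simpa using hj)
      (by rw [List.getElem_set, if_neg hkj]; exact hj0)
  exact join_common (.single s1) (.single s2) (eraseIdx_set_comm' hj hkj.symm r).symm

lemma join_cpre_cpre {t : TP A V} {j k : ℕ} {a b : A} {p' q' : Pat A V}
    (hj : j < t.length) (hk : k < t.length)
    (hdj : t[j]'hj = Sum.inl a :: p') (hdk : t[k]'hk = Sum.inl b :: q') :
    Join (t.set j p') (t.set k q') := by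
  rcases eq_or_ne j k with rfl | hjk
  · rw [hdj] at hdk
    injection hdk with h1 h2
    exact join_of_eq (by rw [h2])
  · have s1 : PStep (t.set j p') ((t.set j p').set k q') :=
      PStep.cpre _ k (by simpa using hk) b q'
        (by rw [List.getElem_set, if_neg hjk]; exact hdk)
    have s2 : PStep (t.set k q') ((t.set k q').set j p') :=
      PStep.cpre _ j (by simpa using hj) a p'
        (by rw [List.getElem_set, if_neg (Ne.symm hjk)]; exact hdj)
    exact join_common (.single s1) (.single s2) (List.set_comm _ _ hjk)

lemma join_cpre_pre {t : TP A V} {j : ℕ} {a : A} {p' : Pat A V} {i k : ℕ} {r : Pat A V}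
    (hj : j < t.length) (hdj : t[j]'hj = Sum.inl a :: p')
    (hi : i < t.length) (hk : k < t.length) (hik : i ≠ k)
    (hdec : t[k]'hk = (t[i]'hi) ++ r) (hne : t[i]'hi ≠ []) :
    Join (t.set j p') (t.set k r) := by
  rcases eq_or_ne j k with rfl | hjk
  · have hij : i ≠ j := hik
    rcases hq : t[i]'hi with _ | ⟨s, u⟩
    · exact absurd hq hne
    · rw [hq, List.cons_append] at hdec
      rw [hdj] at hdec
      injection hdec with h1 h2
      rcases eq_or_ne u [] with rfl | hu
      · exact join_of_eq (by rw [h2, List.nil_append])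
      · have s1a : PStep (t.set j p') ((t.set j p').set i u) :=
          PStep.cpre _ i (by simpa using hi) a u
            (by rw [List.getElem_set, if_neg (Ne.symm hij), hq, ← h1])
        have s1b : PStep ((t.set j p').set i u) (((t.set j p').set i u).set j r) :=
          PStep.pre _ i j (by simpa using hi) (by simpa using hj) hij r
            (by rw [List.getElem_set, if_neg hij, List.getElem_set, if_pos rfl, h2,
                    List.getElem_set, if_pos rfl])
            (by rw [List.getElem_set, if_pos rfl]; exact hu)
        have s2 : PStep (t.set j r) ((t.set j r).set i u) :=
          PStep.cpre _ i (by simpa using hi) a u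
            (by rw [List.getElem_set, if_neg (Ne.symm hij), hq, ← h1])
        exact join_common (Relation.ReflTransGen.head s1a (.single s1b)) (.single s2)
          (by rw [List.set_comm u r hij, List.set_set])
  · rcases eq_or_ne i j with rfl | hij
    · rw [hdj] at hdec
      have s2 : PStep (t.set k r) ((t.set k r).set i p') :=
        PStep.cpre _ i (by simpa using hj) a p'
          (by rw [List.getElem_set, if_neg (Ne.symm hjk)]; exact hdj)
      have s1a : PStep (t.set i p') ((t.set i p').set k (p' ++ r)) :=
        PStep.cpre _ k (by simpa using hk) a (p' ++ r)
          (by rw [List.getElem_set, if_neg hjk, hdec, List.cons_append])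
      rcases eq_or_ne p' [] with rfl | hp
      · refine join_common (.single s1a) (.single s2) ?_
        rw [List.nil_append]
        exact List.set_comm _ _ hjk
      · have s1b : PStep ((t.set i p').set k (p' ++ r))
            (((t.set i p').set k (p' ++ r)).set k r) :=
          PStep.pre _ i k (by simpa using hi) (by simpa using hk) hjk r
            (by rw [List.getElem_set, if_pos rfl, List.getElem_set, if_neg (Ne.symm hjk),
                    List.getElem_set, if_pos rfl])
            (by rw [List.getElem_set, if_neg (Ne.symm hjk), List.getElem_set, if_pos rfl]
                exact hp)
        exact join_common (Relation.ReflTransGen.head s1a (.single s1b)) (.single s2)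
          (by rw [List.set_set, List.set_comm _ _ hjk])
    · have s1 : PStep (t.set j p') ((t.set j p').set k r) :=
        PStep.pre _ i k (by simpa using hi) (by simpa using hk) hik r
          (by rw [List.getElem_set, if_neg hjk, List.getElem_set, if_neg (Ne.symm hij)]
              exact hdec)
          (by rw [List.getElem_set, if_neg (Ne.symm hij)]; exact hne)
      have s2 : PStep (t.set k r) ((t.set k r).set j p') :=
        PStep.cpre _ j (by simpa using hj) a p'
          (by rw [List.getElem_set, if_neg (Ne.symm hjk)]; exact hdj)
      exact join_common (.single s1) (.single s2) (List.set_comm _ _ hjk)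

end JoinLemmas

section PrePre
variable {A V : Type}

lemma join_pre_pre_same {t : TP A V} {i₁ i₂ j : ℕ} {r₁ r₂ : Pat A V}
    (hi₁ : i₁ < t.length) (hi₂ : i₂ < t.length) (hj : j < t.length)
    (h₁j : i₁ ≠ j) (h₂j : i₂ ≠ j) (h₁₂ : i₁ ≠ i₂)
    (hd₁ : t[j]'hj = (t[i₁]'hi₁) ++ r₁) (hd₂ : t[j]'hj = (t[i₂]'hi₂) ++ r₂)
    (hne₁ : t[i₁]'hi₁ ≠ []) (hne₂ : t[i₂]'hi₂ ≠ [])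
    (hpre : (t[i₁]'hi₁) <+: (t[i₂]'hi₂)) :
    Join (t.set j r₁) (t.set j r₂) := by
  obtain ⟨u, hu⟩ := hpre
  have hr : r₁ = u ++ r₂ := by
    apply List.append_cancel_left (as := t[i₁]'hi₁)
    rw [← hd₁, ← List.append_assoc, hu, ← hd₂]
  rcases eq_or_ne u [] with rfl | hu0
  · exact join_of_eq (by rw [hr, List.nil_append])
  · have s1a : PStep (t.set j r₁) ((t.set j r₁).set i₂ u) :=
      PStep.pre _ i₁ i₂ (by simpa using hi₁) (by simpa using hi₂) h₁₂ u
        (by rw [List.getElem_set, if_neg (Ne.symm h₂j), List.getElem_set,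
                if_neg (Ne.symm h₁j), ← hu])
        (by rw [List.getElem_set, if_neg (Ne.symm h₁j)]; exact hne₁)
    have s1b : PStep ((t.set j r₁).set i₂ u) (((t.set j r₁).set i₂ u).set j r₂) :=
      PStep.pre _ i₂ j (by simpa using hi₂) (by simpa using hj) h₂j r₂
        (by rw [List.getElem_set, if_neg h₂j, List.getElem_set, if_pos rfl, hr,
                List.getElem_set, if_pos rfl])
        (by rw [List.getElem_set, if_pos rfl]; exact hu0)
    have s2 : PStep (t.set j r₂) ((t.set j r₂).set i₂ u) :=
      PStep.pre _ i₁ i₂ (by simpa using hi₁) (by simpa using hi₂) h₁₂ u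
        (by rw [List.getElem_set, if_neg (Ne.symm h₂j), List.getElem_set,
                if_neg (Ne.symm h₁j), ← hu])
        (by rw [List.getElem_set, if_neg (Ne.symm h₁j)]; exact hne₁)
    exact join_common (Relation.ReflTransGen.head s1a (.single s1b)) (.single s2)
      (by rw [List.set_comm u r₂ h₂j, List.set_set])

lemma join_pre_pre_cross {t : TP A V} {j₁ j₂ : ℕ} {r₁ r₂ : Pat A V}
    (hj₁ : j₁ < t.length) (hj₂ : j₂ < t.length) (hj : j₁ ≠ j₂)
    (hd₁ : t[j₁]'hj₁ = (t[j₂]'hj₂) ++ r₁) (hd₂ : t[j₂]'hj₂ = (t[j₁]'hj₁) ++ r₂) :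
    Join (t.set j₁ r₁) (t.set j₂ r₂) := by
  have hlen := congrArg List.length hd₁
  have hlen2 := congrArg List.length hd₂
  rw [List.length_append] at hlen hlen2
  have hr₁ : r₁ = [] := List.length_eq_zero_iff.mp (by omega)
  have hr₂ : r₂ = [] := List.length_eq_zero_iff.mp (by omega)
  subst hr₁; subst hr₂
  have heq : t[j₁]'hj₁ = t[j₂]'hj₂ := by rw [hd₁, List.append_nil]
  have s1 : PStep (t.set j₁ []) ((t.set j₁ []).eraseIdx j₁) :=
    PStep.eps _ j₁ (by simpa using hj₁) (by rw [List.getElem_set, if_pos rfl])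
  have s2 : PStep (t.set j₂ []) ((t.set j₂ []).eraseIdx j₂) :=
    PStep.eps _ j₂ (by simpa using hj₂) (by rw [List.getElem_set, if_pos rfl])
  refine ⟨_, _, .single s1, .single s2, ?_⟩
  rw [eraseIdx_set_self', eraseIdx_set_self']
  exact perm_eraseIdx_eraseIdx hj₁ hj₂ heq

lemma join_pre_pre_chain {t : TP A V} {i₂ j₁ j₂ : ℕ} {r₁ r₂ : Pat A V}
    (hi₂ : i₂ < t.length) (hj₁ : j₁ < t.length) (hj₂ : j₂ < t.length)
    (hj : j₁ ≠ j₂) (h2j2 : i₂ ≠ j₂) (h2j1 : i₂ ≠ j₁)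
    (hd₁ : t[j₁]'hj₁ = (t[j₂]'hj₂) ++ r₁) (hd₂ : t[j₂]'hj₂ = (t[i₂]'hi₂) ++ r₂)
    (hne₂ : t[i₂]'hi₂ ≠ []) :
    Join (t.set j₁ r₁) (t.set j₂ r₂) := by
  have hd₁' : t[j₁]'hj₁ = (t[i₂]'hi₂) ++ (r₂ ++ r₁) := by
    rw [hd₁, hd₂, List.append_assoc]
  have s1 : PStep (t.set j₁ r₁) ((t.set j₁ r₁).set j₂ r₂) :=
    PStep.pre _ i₂ j₂ (by simpa using hi₂) (by simpa using hj₂) h2j2 r₂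
      (by rw [List.getElem_set, if_neg hj, List.getElem_set, if_neg (Ne.symm h2j1)]
          exact hd₂)
      (by rw [List.getElem_set, if_neg (Ne.symm h2j1)]; exact hne₂)
  have s2a : PStep (t.set j₂ r₂) ((t.set j₂ r₂).set j₁ (r₂ ++ r₁)) :=
    PStep.pre _ i₂ j₁ (by simpa using hi₂) (by simpa using hj₁) h2j1 (r₂ ++ r₁)
      (by rw [List.getElem_set, if_neg (Ne.symm hj), List.getElem_set,
              if_neg (Ne.symm h2j2)]
          exact hd₁')
      (by rw [List.getElem_set, if_neg (Ne.symm h2j2)]; exact hne₂)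
  rcases eq_or_ne r₂ [] with rfl | hr2
  · refine join_common (.single s1) (.single s2a) ?_
    rw [List.nil_append]
    exact List.set_comm _ _ hj
  · have s2b : PStep ((t.set j₂ r₂).set j₁ (r₂ ++ r₁))
        (((t.set j₂ r₂).set j₁ (r₂ ++ r₁)).set j₁ r₁) :=
      PStep.pre _ j₂ j₁ (by simpa using hj₂) (by simpa using hj₁) (Ne.symm hj) r₁
        (by rw [List.getElem_set, if_pos rfl, List.getElem_set, if_neg hj,
                List.getElem_set, if_pos rfl])
        (by rw [List.getElem_set, if_neg hj, List.getElem_set, if_pos rfl]; exact hr2)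
    refine join_common (.single s1) (Relation.ReflTransGen.head s2a (.single s2b)) ?_
    rw [List.set_set]
    exact List.set_comm _ _ hj

lemma join_pre_pre {t : TP A V} {i₁ j₁ i₂ j₂ : ℕ} {r₁ r₂ : Pat A V}
    (hi₁ : i₁ < t.length) (hj₁ : j₁ < t.length) (h₁ : i₁ ≠ j₁)
    (hd₁ : t[j₁]'hj₁ = (t[i₁]'hi₁) ++ r₁) (hne₁ : t[i₁]'hi₁ ≠ [])
    (hi₂ : i₂ < t.length) (hj₂ : j₂ < t.length) (h₂ : i₂ ≠ j₂)
    (hd₂ : t[j₂]'hj₂ = (t[i₂]'hi₂) ++ r₂) (hne₂ : t[i₂]'hi₂ ≠ []) :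
    Join (t.set j₁ r₁) (t.set j₂ r₂) := by
  rcases eq_or_ne j₁ j₂ with rfl | hj
  · rcases eq_or_ne i₁ i₂ with rfl | hi
    · have : r₁ = r₂ := List.append_cancel_left (hd₁.symm.trans hd₂)
      exact join_of_eq (by rw [this])
    · rcases List.prefix_or_prefix_of_prefix ⟨r₁, hd₁.symm⟩ ⟨r₂, hd₂.symm⟩ with hp | hp
      · exact join_pre_pre_same hi₁ hi₂ hj₁ h₁ h₂ hi hd₁ hd₂ hne₁ hne₂ hp
      · exact (join_pre_pre_same hi₂ hi₁ hj₁ h₂ h₁ hi.symm hd₂ hd₁ hne₂ hne₁ hp).symm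
  · rcases eq_or_ne i₁ j₂ with rfl | hi₁j₂
    · rcases eq_or_ne i₂ j₁ with rfl | hi₂j₁
      · exact join_pre_pre_cross hj₁ hj₂ hj hd₁ hd₂
      · exact join_pre_pre_chain hi₂ hj₁ hj₂ hj h₂ hi₂j₁ hd₁ hd₂ hne₂
    · rcases eq_or_ne i₂ j₁ with rfl | hi₂j₁
      · exact (join_pre_pre_chain hi₁ hj₂ hj₁ (Ne.symm hj) h₁ hi₁j₂ hd₂ hd₁ hne₁).symm
      · have s1 : PStep (t.set j₁ r₁) ((t.set j₁ r₁).set j₂ r₂) :=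
          PStep.pre _ i₂ j₂ (by simpa using hi₂) (by simpa using hj₂) h₂ r₂
            (by rw [List.getElem_set, if_neg hj, List.getElem_set, if_neg (Ne.symm hi₂j₁)]
                exact hd₂)
            (by rw [List.getElem_set, if_neg (Ne.symm hi₂j₁)]; exact hne₂)
        have s2 : PStep (t.set j₂ r₂) ((t.set j₂ r₂).set j₁ r₁) :=
          PStep.pre _ i₁ j₁ (by simpa using hi₁) (by simpa using hj₁) h₁ r₁
            (by rw [List.getElem_set, if_neg (Ne.symm hj), List.getElem_set,
                    if_neg (Ne.symm hi₁j₂)]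
                exact hd₁)
            (by rw [List.getElem_set, if_neg (Ne.symm hi₁j₂)]; exact hne₁)
        exact join_common (.single s1) (.single s2) (List.set_comm _ _ hj)

end PrePre

/-- **Weak confluence of pattern reduction up to permutation.**
If `t ⇒ t₁` and `t ⇒ t₂`, then there are `t₁′` and `t₂′` with `t₁ ⇒* t₁′`, `t₂ ⇒* t₂′`,
and `t₁′` a permutation of `t₂′`. -/
theorem pstep_weak_confluence [Nontrivial A] [Countable V] [Infinite V]
    (t t₁ t₂ : TP A V) (h₁ : PStep t t₁) (h₂ : PStep t t₂) :
    ∃ t₁' t₂' : TP A V,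
      Relation.ReflTransGen PStep t₁ t₁' ∧
      Relation.ReflTransGen PStep t₂ t₂' ∧
      t₁'.Perm t₂' := by
  cases h₁ with
  | pre i₁ j₁ hi₁ hj₁ hij₁ p₁ hd₁ hne₁ =>
    cases h₂ with
    | pre i₂ j₂ hi₂ hj₂ hij₂ p₂ hd₂ hne₂ =>
      exact join_pre_pre hi₁ hj₁ hij₁ hd₁ hne₁ hi₂ hj₂ hij₂ hd₂ hne₂
    | cpre j₂ hj₂ a p₂ hd₂ =>
      exact (join_cpre_pre hj₂ hd₂ hi₁ hj₁ hij₁ hd₁ hne₁).symm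
    | eps j₂ hj₂ he₂ =>
      exact (join_eps_pre hj₂ hi₁ hj₁ hij₁ he₂ hd₁ hne₁).symm
  | cpre j₁ hj₁ a₁ p₁ hd₁ =>
    cases h₂ with
    | pre i₂ j₂ hi₂ hj₂ hij₂ p₂ hd₂ hne₂ =>
      exact join_cpre_pre hj₁ hd₁ hi₂ hj₂ hij₂ hd₂ hne₂
    | cpre j₂ hj₂ a₂ p₂ hd₂ =>
      exact join_cpre_cpre hj₁ hj₂ hd₁ hd₂
    | eps j₂ hj₂ he₂ =>
      exact (join_eps_cpre hj₂ hj₁ he₂ hd₁).symm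
  | eps j₁ hj₁ he₁ =>
    cases h₂ with
    | pre i₂ j₂ hi₂ hj₂ hij₂ p₂ hd₂ hne₂ =>
      exact join_eps_pre hj₁ hi₂ hj₂ hij₂ he₁ hd₂ hne₂
    | cpre j₂ hj₂ a₂ p₂ hd₂ =>
      exact join_eps_cpre hj₁ hj₂ he₁ hd₂
    | eps j₂ hj₂ he₂ =>
      exact join_eps_eps hj₁ hj₂ he₁ he₂


end STPaper
end

section
/- Church–Rosser property of pattern reduction up to permutation: if t_L ⇒* t_{L,1} and t_R ⇒* t_{R,1} where t_L is a permutation of t_R, then there exist t_{L,2} and t_{R,2} such that t_{L,1} ⇒* t_{L,2}, t_{R,1} ⇒* t_{R,2}, and t_{L,2} is a permutation of t_{R,2}. -/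
namespace STPaper

variable {A V : Type}

section ChurchRosserAux

inductive MS : Multiset (Pat A V) → Multiset (Pat A V) → Prop
  | pre (p r : Pat A V) (m : Multiset (Pat A V)) (hp : p ≠ []) :
      MS (p ::ₘ (p ++ r) ::ₘ m) (p ::ₘ r ::ₘ m)
  | cpre (a : A) (r : Pat A V) (m : Multiset (Pat A V)) :
      MS ((Sum.inl a :: r) ::ₘ m) (r ::ₘ m)
  | eps (m : Multiset (Pat A V)) : MS (([] : Pat A V) ::ₘ m) m

lemma msE {s s' t t' : Multiset (Pat A V)} (h : MS s' t') (hs : s = s') (ht : t = t') :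
    MS s t := by rw [hs, ht]; exact h

lemma ms_cons (x : Pat A V) {s t : Multiset (Pat A V)} (h : MS s t) : MS (x ::ₘ s) (x ::ₘ t) := by
  cases h with
  | pre p r m hp =>
    rw [Multiset.cons_swap x p, Multiset.cons_swap x (p ++ r),
        Multiset.cons_swap x p, Multiset.cons_swap x r]
    exact .pre p r _ hp
  | cpre a r m =>
    rw [Multiset.cons_swap x _, Multiset.cons_swap x r]
    exact .cpre a r _
  | eps m =>
    rw [Multiset.cons_swap x []]
    exact .eps _

lemma ms_pre' {p : Pat A V} (r : Pat A V) {m : Multiset (Pat A V)} (hp : p ≠ []) (hm : p ∈ m) :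
    MS ((p ++ r) ::ₘ m) (r ::ₘ m) := by
  classical
  have h := Multiset.cons_erase hm
  rw [← h, Multiset.cons_swap (p ++ r) p, Multiset.cons_swap r p]
  exact .pre p r _ hp

lemma cons_cases {α : Type*} {x y : α} {s t : Multiset α} (h : x ::ₘ s = y ::ₘ t) :
    (x = y ∧ s = t) ∨ ∃ u, s = y ::ₘ u ∧ t = x ::ₘ u := by
  by_cases hxy : x = y
  · subst hxy
    exact Or.inl ⟨rfl, (Multiset.cons_inj_right x).mp h⟩
  · rcases Multiset.cons_eq_cons.mp h with ⟨rfl, _⟩ | ⟨_, u, hu⟩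
    · exact absurd rfl hxy
    · exact Or.inr ⟨u, hu⟩

def MJoin (u v : Multiset (Pat A V)) : Prop :=
  ∃ w, Relation.ReflTransGen MS u w ∧ Relation.ReflTransGen MS v w

lemma MJoin.symm {u v : Multiset (Pat A V)} (h : MJoin u v) : MJoin v u := by
  obtain ⟨w, h1, h2⟩ := h; exact ⟨w, h2, h1⟩

lemma mjoin_of_eq {u v : Multiset (Pat A V)} (h : u = v) : MJoin u v := ⟨v, by rw [h], .refl⟩

/-- one-sided version of the same-redex pre/pre overlap. -/
lemma jC (p δ r₂ : Pat A V) (d : Multiset (Pat A V)) (hp : p ≠ []) :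
    MJoin (p ::ₘ (δ ++ r₂) ::ₘ (p ++ δ) ::ₘ d) ((p ++ δ) ::ₘ r₂ ::ₘ p ::ₘ d) := by
  by_cases hδ : δ = []
  · subst hδ
    exact mjoin_of_eq (by simp [Multiset.cons_swap])
  · refine ⟨p ::ₘ δ ::ₘ r₂ ::ₘ d, ?_, ?_⟩
    · have s1 : MS (p ::ₘ (δ ++ r₂) ::ₘ (p ++ δ) ::ₘ d) (p ::ₘ (δ ++ r₂) ::ₘ δ ::ₘ d) :=
        msE (ms_pre' (p := p) (m := p ::ₘ (δ ++ r₂) ::ₘ d) δ hp (by simp))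
          (by simp [Multiset.cons_swap]) (by simp [Multiset.cons_swap])
      have s2 : MS (p ::ₘ (δ ++ r₂) ::ₘ δ ::ₘ d) (p ::ₘ δ ::ₘ r₂ ::ₘ d) :=
        msE (ms_pre' (p := δ) (m := δ ::ₘ p ::ₘ d) r₂ hδ (by simp))
          (by simp [Multiset.cons_swap]) (by simp [Multiset.cons_swap])
      exact (Relation.ReflTransGen.single s2).head s1
    · exact .single (msE (ms_pre' (p := p) (m := r₂ ::ₘ p ::ₘ d) δ hp (by simp))
        (by simp [Multiset.cons_swap]) (by simp [Multiset.cons_swap]))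

/-- one-sided version of the nested pre/pre overlap. -/
lemma jA (p r₁ r₂ : Pat A V) (d : Multiset (Pat A V)) (hp : p ≠ []) :
    MJoin (p ::ₘ r₁ ::ₘ (p ++ r₁ ++ r₂) ::ₘ d) ((p ++ r₁) ::ₘ r₂ ::ₘ p ::ₘ d) := by
  refine ⟨p ::ₘ r₁ ::ₘ r₂ ::ₘ d, ?_, ?_⟩
  · by_cases hr : r₁ = []
    · subst hr
      simp only [List.append_nil]
      exact .single (msE (ms_pre' (p := p) (m := p ::ₘ ([] : Pat A V) ::ₘ d) r₂ hp (by simp))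
        (by simp [Multiset.cons_swap]) (by simp [Multiset.cons_swap]))
    · have s1 : MS (p ::ₘ r₁ ::ₘ (p ++ r₁ ++ r₂) ::ₘ d) (p ::ₘ r₁ ::ₘ (r₁ ++ r₂) ::ₘ d) :=
        msE (ms_pre' (p := p) (m := p ::ₘ r₁ ::ₘ d) (r₁ ++ r₂) hp (by simp))
          (by simp [Multiset.cons_swap, List.append_assoc]) (by simp [Multiset.cons_swap])
      have s2 : MS (p ::ₘ r₁ ::ₘ (r₁ ++ r₂) ::ₘ d) (p ::ₘ r₁ ::ₘ r₂ ::ₘ d) :=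
        msE (ms_pre' (p := r₁) (m := p ::ₘ r₁ ::ₘ d) r₂ hr (by simp))
          (by simp [Multiset.cons_swap]) (by simp [Multiset.cons_swap])
      exact (Relation.ReflTransGen.single s2).head s1
  · exact .single (msE (ms_pre' (p := p) (m := r₂ ::ₘ p ::ₘ d) r₁ hp (by simp))
      (by simp [Multiset.cons_swap]) (by simp [Multiset.cons_swap]))


lemma rtg_pre_opt (q r : Pat A V) (m : Multiset (Pat A V)) :
    Relation.ReflTransGen MS (q ::ₘ (q ++ r) ::ₘ m) (q ::ₘ r ::ₘ m) := by
  by_cases hq : q = []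
  · subst hq; simp only [List.nil_append]; exact .refl
  · exact .single (.pre q r m hq)

lemma loc_pp {p₁ r₁ p₂ r₂ : Pat A V} {m₁ m₂ : Multiset (Pat A V)}
    (hp₁ : p₁ ≠ []) (hp₂ : p₂ ≠ [])
    (h : p₁ ::ₘ (p₁ ++ r₁) ::ₘ m₁ = p₂ ::ₘ (p₂ ++ r₂) ::ₘ m₂) :
    MJoin (p₁ ::ₘ r₁ ::ₘ m₁) (p₂ ::ₘ r₂ ::ₘ m₂) := by
  rcases cons_cases h with ⟨hpq, h2⟩ | ⟨c, hc1, hc2⟩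
  · subst hpq
    rcases cons_cases h2 with ⟨hq, hm⟩ | ⟨c, hc1, hc2⟩
    · obtain rfl : r₁ = r₂ := List.append_cancel_left hq
      subst hm
      exact mjoin_of_eq rfl
    · subst hc1; subst hc2
      refine ⟨p₁ ::ₘ r₁ ::ₘ r₂ ::ₘ c, ?_, ?_⟩
      · exact .single (msE (ms_pre' (p := p₁) (m := p₁ ::ₘ r₁ ::ₘ c) r₂ hp₁ (by simp))
          (by simp [Multiset.cons_swap]) (by simp [Multiset.cons_swap]))
      · exact .single (msE (ms_pre' (p := p₁) (m := p₁ ::ₘ r₂ ::ₘ c) r₁ hp₁ (by simp))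
          (by simp [Multiset.cons_swap]) (by simp [Multiset.cons_swap]))
  · rcases cons_cases hc1 with ⟨hq, hm⟩ | ⟨d, hd1, hd2⟩
    · subst hm
      rcases cons_cases hc2 with ⟨hq2, hm2⟩ | ⟨d, hd1, hd2⟩
      · have hr1 : r₁ = [] ∧ r₂ = [] := by
          have l1 := congrArg List.length hq
          have l2 := congrArg List.length hq2
          simp only [List.length_append] at l1 l2
          constructor <;> [skip; skip] <;>
            (apply List.eq_nil_of_length_eq_zero; omega)
        obtain ⟨rfl, rfl⟩ := hr1
        obtain rfl : p₁ = p₂ := by simpa using hq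
        subst hm2
        exact mjoin_of_eq rfl
      · subst hd1; subst hd2; subst hq
        exact jA p₁ r₁ r₂ d hp₁
    · subst hd1; subst hd2
      rcases cons_cases hc2 with ⟨hq2, hm2⟩ | ⟨e, he1, he2⟩
      · subst hm2
        rw [← hq2]
        exact (jA p₂ r₂ r₁ d hp₂).symm
      · subst he1
        rcases cons_cases he2 with ⟨hq3, hde⟩ | ⟨f, hf1, hf2⟩
        · subst hde
          rcases List.append_eq_append_iff.mp hq3 with ⟨δ, hδ1, hδ2⟩ | ⟨δ, hδ1, hδ2⟩
          · subst hδ1; subst hδ2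
            exact jC p₁ δ r₂ d hp₁
          · subst hδ1; subst hδ2
            exact (jC p₂ δ r₁ d hp₂).symm
        · subst hf1; subst hf2
          refine ⟨p₁ ::ₘ r₁ ::ₘ p₂ ::ₘ r₂ ::ₘ f, ?_, ?_⟩
          · exact .single (msE (ms_pre' (p := p₂) (m := p₁ ::ₘ r₁ ::ₘ p₂ ::ₘ f) r₂ hp₂ (by simp))
              (by simp [Multiset.cons_swap]) (by simp [Multiset.cons_swap]))
          · exact .single (msE (ms_pre' (p := p₁) (m := p₂ ::ₘ r₂ ::ₘ p₁ ::ₘ f) r₁ hp₁ (by simp))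
              (by simp [Multiset.cons_swap]) (by simp [Multiset.cons_swap]))

lemma loc_pc {p r : Pat A V} {m : Multiset (Pat A V)} (hp : p ≠ []) {a : A} {q : Pat A V}
    {m' : Multiset (Pat A V)}
    (h : p ::ₘ (p ++ r) ::ₘ m = (Sum.inl a :: q) ::ₘ m') :
    MJoin (p ::ₘ r ::ₘ m) (q ::ₘ m') := by
  rcases cons_cases h with ⟨h1, h2⟩ | ⟨c, hc1, hc2⟩
  · subst h2
    refine ⟨q ::ₘ r ::ₘ m, .single (msE (MS.cpre a q (r ::ₘ m)) (by rw [h1]) rfl), ?_⟩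
    have e : p ++ r = Sum.inl a :: (q ++ r) := by rw [h1]; rfl
    have s1 : MS (q ::ₘ (p ++ r) ::ₘ m) (q ::ₘ (q ++ r) ::ₘ m) :=
      msE (ms_cons q (MS.cpre a (q ++ r) m)) (by rw [e]) rfl
    exact .head s1 (rtg_pre_opt q r m)
  · rcases cons_cases hc1 with ⟨h1, h2⟩ | ⟨d, hd1, hd2⟩
    · subst h2; subst hc2
      obtain ⟨s, p₀, rfl⟩ : ∃ s p₀, p = s :: p₀ := by
        cases p with
        | nil => exact absurd rfl hp
        | cons s p₀ => exact ⟨s, p₀, rfl⟩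
      rw [List.cons_append] at h1
      injection h1 with hs hq
      subst hs; subst hq
      refine ⟨p₀ ::ₘ r ::ₘ m, .single (MS.cpre a p₀ (r ::ₘ m)), ?_⟩
      have s1 : MS ((p₀ ++ r) ::ₘ (Sum.inl a :: p₀) ::ₘ m) ((p₀ ++ r) ::ₘ p₀ ::ₘ m) :=
        ms_cons (p₀ ++ r) (MS.cpre a p₀ m)
      exact .head s1 (by rw [Multiset.cons_swap]; exact rtg_pre_opt p₀ r m)
    · subst hd1; subst hd2; subst hc2
      refine ⟨p ::ₘ r ::ₘ q ::ₘ d, ?_, ?_⟩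
      · exact .single (msE (MS.cpre a q (p ::ₘ r ::ₘ d)) (by simp [Multiset.cons_swap])
          (by simp [Multiset.cons_swap]))
      · exact .single (msE (ms_pre' (p := p) (m := q ::ₘ p ::ₘ d) r hp (by simp))
          (by simp [Multiset.cons_swap]) (by simp [Multiset.cons_swap]))

lemma loc_pe {p r : Pat A V} {m m' : Multiset (Pat A V)} (hp : p ≠ [])
    (h : p ::ₘ (p ++ r) ::ₘ m = ([] : Pat A V) ::ₘ m') :
    MJoin (p ::ₘ r ::ₘ m) m' := by
  rcases cons_cases h with ⟨h1, h2⟩ | ⟨c, hc1, hc2⟩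
  · exact absurd h1 hp
  · rcases cons_cases hc1 with ⟨h1, h2⟩ | ⟨d, hd1, hd2⟩
    · exact absurd h1 (by simp [hp])
    · subst hd1; subst hd2; subst hc2
      refine ⟨p ::ₘ r ::ₘ d, ?_, .single (MS.pre p r d hp)⟩
      exact .single (msE (MS.eps (p ::ₘ r ::ₘ d)) (by simp [Multiset.cons_swap]) rfl)

lemma loc_cc {a : A} {q : Pat A V} {m : Multiset (Pat A V)} {b : A} {q' : Pat A V}
    {m' : Multiset (Pat A V)}
    (h : (Sum.inl a :: q) ::ₘ m = (Sum.inl b :: q') ::ₘ m') :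
    MJoin (q ::ₘ m) (q' ::ₘ m') := by
  rcases cons_cases h with ⟨h1, h2⟩ | ⟨c, rfl, rfl⟩
  · injection h1 with hs hq
    subst hq; subst h2
    exact mjoin_of_eq rfl
  · refine ⟨q ::ₘ q' ::ₘ c, ?_, ?_⟩
    · exact .single (ms_cons q (MS.cpre b q' c))
    · exact .single (msE (ms_cons q' (MS.cpre a q c)) rfl (Multiset.cons_swap q q' c))

lemma loc_ce {a : A} {q : Pat A V} {m m' : Multiset (Pat A V)}
    (h : (Sum.inl a :: q) ::ₘ m = ([] : Pat A V) ::ₘ m') :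
    MJoin (q ::ₘ m) m' := by
  rcases cons_cases h with ⟨h1, _⟩ | ⟨c, rfl, rfl⟩
  · exact absurd h1 (by simp)
  · refine ⟨q ::ₘ c, ?_, .single (MS.cpre a q c)⟩
    exact .single (msE (MS.eps (q ::ₘ c)) (Multiset.cons_swap q [] c) rfl)

lemma loc_ee {m m' : Multiset (Pat A V)}
    (h : ([] : Pat A V) ::ₘ m = ([] : Pat A V) ::ₘ m') : MJoin m m' :=
  mjoin_of_eq ((Multiset.cons_inj_right _).mp h)

lemma ms_local {s u v : Multiset (Pat A V)} (h1 : MS s u) (h2 : MS s v) : MJoin u v := by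
  cases h1 with
  | pre p r m hp =>
    generalize hs : p ::ₘ (p ++ r) ::ₘ m = s₀ at h2
    cases h2 with
    | pre p' r' m' hp' => exact loc_pp hp hp' hs
    | cpre a q m' => exact loc_pc hp hs
    | eps m' => exact loc_pe hp hs
  | cpre a q m =>
    generalize hs : (Sum.inl a :: q) ::ₘ m = s₀ at h2
    cases h2 with
    | pre p' r' m' hp' => exact (loc_pc hp' hs.symm).symm
    | cpre b q' m' => exact loc_cc hs
    | eps m' => exact loc_ce hs
  | eps _ =>
    generalize hs : ([] : Pat A V) ::ₘ u = s₀ at h2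
    cases h2 with
    | pre p' r' m' hp' => exact (loc_pe hp' hs.symm).symm
    | cpre b q' m' => exact (loc_ce hs.symm).symm
    | eps m' => exact loc_ee hs


def msize (s : Multiset (Pat A V)) : ℕ := (s.map List.length).sum + Multiset.card s

lemma ms_size {s t : Multiset (Pat A V)} (h : MS s t) : msize t < msize s := by
  cases h with
  | pre p r m hp =>
    have : 0 < p.length := List.length_pos_iff.mpr hp
    simp only [msize, Multiset.map_cons, Multiset.sum_cons, Multiset.card_cons,
      List.length_append]
    omega
  | cpre a r m =>
    simp only [msize, Multiset.map_cons, Multiset.sum_cons, Multiset.card_cons,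
      List.length_cons]
    omega
  | eps m =>
    simp only [msize, Multiset.map_cons, Multiset.sum_cons, Multiset.card_cons,
      List.length_nil]
    omega

lemma ms_conf_aux : ∀ (n : ℕ) (s u v : Multiset (Pat A V)), msize s ≤ n →
    Relation.ReflTransGen MS s u → Relation.ReflTransGen MS s v → MJoin u v := by
  intro n
  induction n using Nat.strong_induction_on with
  | _ n IH =>
    intro s u v hn hu hv
    rcases hu.cases_head with rfl | ⟨u₁, hsu₁, hu₁⟩
    · exact ⟨v, hv, .refl⟩
    rcases hv.cases_head with rfl | ⟨v₁, hsv₁, hv₁⟩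
    · exact ⟨u, .refl, hu⟩
    obtain ⟨w₀, hw₀u, hw₀v⟩ := ms_local hsu₁ hsv₁
    have hu₁n : msize u₁ < n := lt_of_lt_of_le (ms_size hsu₁) hn
    obtain ⟨w₁, hw₁u, hw₁w₀⟩ := IH (msize u₁) hu₁n u₁ u w₀ le_rfl hu₁ hw₀u
    have hv₁n : msize v₁ < n := lt_of_lt_of_le (ms_size hsv₁) hn
    obtain ⟨w₂, hw₂v, hw₂w₁⟩ := IH (msize v₁) hv₁n v₁ v w₁ le_rfl hv₁ (hw₀v.trans hw₁w₀)
    exact ⟨w₂, hw₁u.trans hw₂w₁, hw₂v⟩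

lemma ms_conf {s u v : Multiset (Pat A V)}
    (hu : Relation.ReflTransGen MS s u) (hv : Relation.ReflTransGen MS s v) : MJoin u v :=
  ms_conf_aux (msize s) s u v le_rfl hu hv


section Bridge

lemma perm_getElem_eraseIdx {t : TP A V} {j : ℕ} (hj : j < t.length) :
    t.Perm (t[j] :: t.eraseIdx j) := by
  conv_lhs => rw [← List.take_append_drop j t, List.drop_eq_getElem_cons hj]
  rw [List.eraseIdx_eq_take_drop_succ]
  exact List.perm_middle

lemma coe_eraseIdx {t : TP A V} {j : ℕ} (hj : j < t.length) :
    (t : Multiset (Pat A V)) = t[j] ::ₘ ((t.eraseIdx j : TP A V) : Multiset (Pat A V)) := by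
  have := Multiset.coe_eq_coe.mpr (perm_getElem_eraseIdx hj)
  simpa using this

lemma coe_set {t : TP A V} {j : ℕ} (hj : j < t.length) (p' : Pat A V) :
    ((t.set j p' : TP A V) : Multiset (Pat A V)) =
      p' ::ₘ ((t.eraseIdx j : TP A V) : Multiset (Pat A V)) := by
  have hperm : (t.set j p').Perm (p' :: t.eraseIdx j) := by
    rw [List.set_eq_take_append_cons_drop, if_pos hj, List.eraseIdx_eq_take_drop_succ]
    exact List.perm_middle
  have := Multiset.coe_eq_coe.mpr hperm
  simpa using this

lemma getElem_mem_eraseIdx {t : TP A V} {i j : ℕ} (hi : i < t.length) (hj : j < t.length)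
    (hij : i ≠ j) : t[i] ∈ t.eraseIdx j := by
  have hlen : (t.eraseIdx j).length = t.length - 1 := by
    rw [List.length_eraseIdx]; simp [hj]
  rcases Nat.lt_or_ge i j with h | h
  · have hi' : i < (t.eraseIdx j).length := by omega
    have he := List.getElem_eraseIdx (l := t) (i := j) (j := i) hi'
    rw [dif_pos h] at he
    exact he ▸ List.getElem_mem hi'
  · have h' : j < i := lt_of_le_of_ne h (Ne.symm hij)
    have hi' : i - 1 < (t.eraseIdx j).length := by omega
    have he := List.getElem_eraseIdx (l := t) (i := j) (j := i - 1) hi'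
    rw [dif_neg (by omega)] at he
    simp only [show i - 1 + 1 = i from by omega] at he
    exact he ▸ List.getElem_mem hi'

lemma pstep_ms {t u : TP A V} (h : PStep t u) : MS (t : Multiset (Pat A V)) u := by
  classical
  cases h with
  | pre i j hi hj hij p' hdec hne =>
    have hmem : t[i] ∈ ((t.eraseIdx j : TP A V) : Multiset (Pat A V)) := by
      exact_mod_cast getElem_mem_eraseIdx hi hj hij
    have e1 : (t : Multiset (Pat A V)) =
        t[i] ::ₘ (t[i] ++ p') ::ₘ
          (((t.eraseIdx j : TP A V) : Multiset (Pat A V)).erase t[i]) := by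
      conv_lhs => rw [coe_eraseIdx hj, hdec, ← Multiset.cons_erase hmem, Multiset.cons_swap]
    have e2 : ((t.set j p' : TP A V) : Multiset (Pat A V)) =
        t[i] ::ₘ p' ::ₘ (((t.eraseIdx j : TP A V) : Multiset (Pat A V)).erase t[i]) := by
      conv_lhs => rw [coe_set hj, ← Multiset.cons_erase hmem, Multiset.cons_swap]
    rw [e1, e2]
    exact .pre _ _ _ hne
  | cpre j hj a p' hdec =>
    rw [coe_eraseIdx hj, hdec, coe_set hj]
    exact .cpre a p' _
  | eps j hj heps =>
    rw [coe_eraseIdx hj, heps]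
    exact .eps _

lemma ms_pstep {t : TP A V} {s' : Multiset (Pat A V)} (h : MS (t : Multiset (Pat A V)) s') :
    ∃ u : TP A V, PStep t u ∧ (u : Multiset (Pat A V)) = s' := by
  classical
  generalize hs : (t : Multiset (Pat A V)) = s₀ at h
  cases h with
  | pre p r m hp =>
    have hmemj : p ++ r ∈ t := by
      have : p ++ r ∈ (t : Multiset (Pat A V)) := by
        rw [hs]; exact Multiset.mem_cons_of_mem (Multiset.mem_cons_self _ _)
      exact_mod_cast this
    obtain ⟨j, hj, hjt⟩ := List.getElem_of_mem hmemj
    have hje : ((t.eraseIdx j : TP A V) : Multiset (Pat A V)) = p ::ₘ m := by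
      have h0 : (t : Multiset (Pat A V)) =
          (p ++ r) ::ₘ ((t.eraseIdx j : TP A V) : Multiset (Pat A V)) := by
        rw [coe_eraseIdx hj, hjt]
      rw [hs] at h0
      rcases cons_cases h0.symm with ⟨h1, h2⟩ | ⟨c, hc1, hc2⟩
      · have hr : r = [] := by
          have := congrArg List.length h1
          simp only [List.length_append] at this
          exact List.eq_nil_of_length_eq_zero (by omega)
        subst hr
        rw [List.append_nil] at h2
        exact h2
      · rw [hc1, (Multiset.cons_inj_right _).mp hc2]
    have hmemi : p ∈ t.eraseIdx j := by
      have : p ∈ ((t.eraseIdx j : TP A V) : Multiset (Pat A V)) := by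
        rw [hje]; exact Multiset.mem_cons_self _ _
      exact_mod_cast this
    obtain ⟨i', hi', hit⟩ := List.getElem_of_mem hmemi
    have hlen : (t.eraseIdx j).length = t.length - 1 := by
      rw [List.length_eraseIdx]; simp [hj]
    by_cases hcase : i' < j
    · have hi : i' < t.length := by omega
      have hti : t[i'] = p := by
        have he := List.getElem_eraseIdx (l := t) (i := j) (j := i') hi'
        rw [dif_pos hcase] at he
        rw [← he]; exact hit
      refine ⟨t.set j r, PStep.pre t i' j hi hj (by omega) r (by rw [hjt, hti])
        (by rw [hti]; exact hp), ?_⟩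
      rw [coe_set hj, hje, Multiset.cons_swap]
    · have hi : i' + 1 < t.length := by omega
      have hti : t[i' + 1] = p := by
        have he := List.getElem_eraseIdx (l := t) (i := j) (j := i') hi'
        rw [dif_neg hcase] at he
        rw [← he]; exact hit
      refine ⟨t.set j r, PStep.pre t (i' + 1) j hi hj (by omega) r (by rw [hjt, hti])
        (by rw [hti]; exact hp), ?_⟩
      rw [coe_set hj, hje, Multiset.cons_swap]
  | cpre a r m =>
    have hmem : (Sum.inl a :: r : Pat A V) ∈ t := by
      have : (Sum.inl a :: r : Pat A V) ∈ (t : Multiset (Pat A V)) := by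
        rw [hs]; exact Multiset.mem_cons_self _ _
      exact_mod_cast this
    obtain ⟨j, hj, hjt⟩ := List.getElem_of_mem hmem
    refine ⟨t.set j r, PStep.cpre t j hj a r hjt, ?_⟩
    have h0 : (t : Multiset (Pat A V)) =
        (Sum.inl a :: r) ::ₘ ((t.eraseIdx j : TP A V) : Multiset (Pat A V)) := by
      rw [coe_eraseIdx hj, hjt]
    rw [hs] at h0
    rw [coe_set hj, ← (Multiset.cons_inj_right _).mp h0.symm]
  | eps m =>
    have hmem : ([] : Pat A V) ∈ t := by
      have : ([] : Pat A V) ∈ (t : Multiset (Pat A V)) := by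
        rw [hs]; exact Multiset.mem_cons_self _ _
      exact_mod_cast this
    obtain ⟨j, hj, hjt⟩ := List.getElem_of_mem hmem
    refine ⟨t.eraseIdx j, PStep.eps t j hj hjt, ?_⟩
    have h0 : (t : Multiset (Pat A V)) =
        ([] : Pat A V) ::ₘ ((t.eraseIdx j : TP A V) : Multiset (Pat A V)) := by
      rw [coe_eraseIdx hj, hjt]
    rw [hs] at h0
    exact ((Multiset.cons_inj_right _).mp h0.symm)

lemma rtg_pstep_ms {t u : TP A V} (h : Relation.ReflTransGen PStep t u) :
    Relation.ReflTransGen MS (t : Multiset (Pat A V)) (u : Multiset (Pat A V)) :=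
  Relation.ReflTransGen.lift (fun l : TP A V => (l : Multiset (Pat A V)))
    (fun _ _ hab => pstep_ms hab) _ _ h

lemma rtg_ms_pstep {s₀ s' : Multiset (Pat A V)} (h : Relation.ReflTransGen MS s₀ s') :
    ∀ t : TP A V, (t : Multiset (Pat A V)) = s₀ →
      ∃ u : TP A V, Relation.ReflTransGen PStep t u ∧ (u : Multiset (Pat A V)) = s' := by
  induction h using Relation.ReflTransGen.head_induction_on with
  | refl => exact fun t ht => ⟨t, .refl, ht⟩
  | head hstep _ IH =>
    intro t ht
    obtain ⟨u₁, hu₁, hu₁e⟩ := ms_pstep (ht ▸ hstep)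
    obtain ⟨u, hu, hue⟩ := IH u₁ hu₁e
    exact ⟨u, hu.head hu₁, hue⟩

end Bridge

end ChurchRosserAux

/-- **Church–Rosser property of pattern reduction up to permutation.**
If `t_L ⇒* t_{L,1}` and `t_R ⇒* t_{R,1}` where `t_L` is a permutation of `t_R`, then
there are `t_{L,2}` and `t_{R,2}` with `t_{L,1} ⇒* t_{L,2}`, `t_{R,1} ⇒* t_{R,2}`, and
`t_{L,2}` a permutation of `t_{R,2}`. -/
theorem pstep_church_rosser [Nontrivial A] [Countable V] [Infinite V]
    (tL tR tL1 tR1 : TP A V)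
    (hL : Relation.ReflTransGen PStep tL tL1)
    (hR : Relation.ReflTransGen PStep tR tR1)
    (hperm : tL.Perm tR) :
    ∃ tL2 tR2 : TP A V,
      Relation.ReflTransGen PStep tL1 tL2 ∧
      Relation.ReflTransGen PStep tR1 tR2 ∧
      tL2.Perm tR2 := by
  have h1 : Relation.ReflTransGen MS (tL : Multiset (Pat A V)) (tL1 : Multiset (Pat A V)) :=
    rtg_pstep_ms hL
  have h2 : Relation.ReflTransGen MS (tL : Multiset (Pat A V)) (tR1 : Multiset (Pat A V)) := by
    rw [show (tL : Multiset (Pat A V)) = (tR : Multiset (Pat A V)) from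
      Multiset.coe_eq_coe.mpr hperm]
    exact rtg_pstep_ms hR
  obtain ⟨w, hw1, hw2⟩ := ms_conf h1 h2
  obtain ⟨tL2, hL2, hL2e⟩ := rtg_ms_pstep hw1 tL1 rfl
  obtain ⟨tR2, hR2, hR2e⟩ := rtg_ms_pstep hw2 tR1 rfl
  exact ⟨tL2, tR2, hL2, hR2, Multiset.coe_eq_coe.mp (hL2e.trans hR2e.symm)⟩

end STPaper
end
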